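/- arXiv:1010.2467 — 3 statements merged into one kernel-verified Lean document; each statement's English description precedes it below -/
import Mathlib

section
/- For every integer r ≥ 1 and every graph G of order n with independence number α, Γ_{d,r}(G) ≤ r·α·(1 + 2 ln(n/α)). -/
/-- An orientation of a simple graph `G`: each edge gets exactly one direction. -/
structure GraphOrientation {V : Type*} (G : SimpleGraph V) where
  rel : V → V → Prop
  adj_of_rel : ∀ u v, rel u v → G.Adj u v
  rel_of_adj : ∀ u v, G.Adj u v → rel u v ∨ rel v u
  asymm : ∀ u v, rel u v → ¬ rel v u

/-- `S` is a directed dominating set for the digraph relation `D`. -/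
def IsDirDomSet {V : Type*} (D : V → V → Prop) (S : Set V) : Prop :=
  ∀ u, u ∉ S → ∃ v ∈ S, D v u

/-- The directed domination number of a digraph. -/
noncomputable def dirDomNum (V : Type*) [Fintype V] (D : V → V → Prop) : ℕ :=
  sInf {k | ∃ S : Finset V, IsDirDomSet D ↑S ∧ S.card = k}

/-- The directed domination number of a graph: max of `dirDomNum` over orientations. -/
noncomputable def GammaD {V : Type*} [Fintype V] (G : SimpleGraph V) : ℕ :=
  sSup {k | ∃ D : GraphOrientation G, dirDomNum V D.rel = k}

/-- `S` is an independent set of vertices in `G`. -/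
def IsIndepFinset {V : Type*} (G : SimpleGraph V) (S : Finset V) : Prop :=
  ∀ u ∈ S, ∀ v ∈ S, ¬ G.Adj u v

/-- The independence number of `G`. -/
noncomputable def alphaNum {V : Type*} [Fintype V] (G : SimpleGraph V) : ℕ :=
  sSup {k | ∃ S : Finset V, IsIndepFinset G S ∧ S.card = k}

/-- `S` is a directed `r`-dominating set for the digraph relation `D`. -/
def IsDirRDomSet {V : Type*} (D : V → V → Prop) (r : ℕ) (S : Set V) : Prop :=
  ∀ u, u ∉ S → r ≤ ({v | v ∈ S ∧ D v u} : Set V).ncard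

/-- The directed `r`-domination number of a digraph. -/
noncomputable def dirRDomNum (V : Type*) [Fintype V] (D : V → V → Prop) (r : ℕ) : ℕ :=
  sInf {k | ∃ S : Finset V, IsDirRDomSet D r ↑S ∧ S.card = k}

/-- The directed `r`-domination number of a graph: max over orientations. -/
noncomputable def GammaDr {V : Type*} [Fintype V] (G : SimpleGraph V) (r : ℕ) : ℕ :=
  sSup {k | ∃ D : GraphOrientation G, dirRDomNum V D.rel r = k}

section aux
variable {V : Type*} [Fintype V] (G : SimpleGraph V)

lemma indep_card_le_alpha (S : Finset V) (hS : IsIndepFinset G S) :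
    S.card ≤ alphaNum G := by
  apply le_csSup
  · exact ⟨Fintype.card V, by rintro k ⟨T, -, rfl⟩; exact T.card_le_univ⟩
  · exact ⟨S, hS, rfl⟩

lemma one_le_alpha [Nonempty V] : 1 ≤ alphaNum G := by
  have v := Classical.arbitrary V
  have h : IsIndepFinset G {v} := by
    intro a ha b hb
    simp only [Finset.mem_singleton] at ha hb
    subst ha; subst hb; simp
  calc 1 = ({v} : Finset V).card := by simp
  _ ≤ _ := indep_card_le_alpha G _ h

lemma alpha_le_card : alphaNum G ≤ Fintype.card V := by
  refine csSup_le ⟨0, ⟨∅, fun u hu => absurd hu (by simp), by simp⟩⟩ ?_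
  rintro k ⟨T, -, rfl⟩; exact T.card_le_univ

lemma key_count [DecidableEq V] [DecidableRel G.Adj] :
    ∀ (n a : ℕ) (R : Finset V), R.card = n →
      (∀ S ⊆ R, IsIndepFinset G S → S.card ≤ a) →
      (R.card : ℝ)^2 ≤ (a : ℝ) * ∑ v ∈ R, (1 + ((R.filter (G.Adj v)).card : ℝ)) := by
  intro n
  induction n using Nat.strong_induction_on with
  | _ n ih =>
    intro a R hRn hind
    rcases R.eq_empty_or_nonempty with rfl | hne
    · simp
    obtain ⟨v, hv, hmin⟩ := R.exists_min_image (fun v => (R.filter (G.Adj v)).card) hne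
    have ha1 : 1 ≤ a := by
      have := hind {v} (by simpa using hv) (by
        intro a ha b hb
        simp only [Finset.mem_singleton] at ha hb
        subst ha; subst hb; simp)
      simpa using this
    set d := (R.filter (G.Adj v)).card with hd
    set N : Finset V := insert v (R.filter (G.Adj v)) with hN
    have hvN : v ∉ R.filter (G.Adj v) := by simp [Finset.mem_filter]
    have hNcard : N.card = d + 1 := by
      rw [hN, Finset.card_insert_of_notMem hvN]
    have hNsub : N ⊆ R := by
      intro u hu
      rcases Finset.mem_insert.mp hu with rfl | hu
      · exact hv
      · exact (Finset.mem_filter.mp hu).1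
    set R' := R \ N with hR'
    have hcards : R.card = R'.card + (d + 1) := by
      have h1 : R'.card = R.card - N.card := Finset.card_sdiff_of_subset hNsub
      have h2 : N.card ≤ R.card := Finset.card_le_card hNsub
      omega
    -- each u in N has degree ≥ d
    have hsumN : ((d:ℝ) + 1) * ((d:ℝ) + 1) ≤ ∑ u ∈ N, (1 + ((R.filter (G.Adj u)).card : ℝ)) := by
      have : ∀ u ∈ N, (d:ℝ) + 1 ≤ 1 + ((R.filter (G.Adj u)).card : ℝ) := by
        intro u hu
        have hdle : d ≤ (R.filter (G.Adj u)).card := hmin u (hNsub hu)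
        have := (Nat.cast_le (α := ℝ)).2 hdle
        linarith
      have h := Finset.card_nsmul_le_sum N _ _ this
      rw [hNcard, nsmul_eq_mul] at h
      push_cast at h
      linarith
    have hsplit : ∑ u ∈ R, (1 + ((R.filter (G.Adj u)).card : ℝ))
        = ∑ u ∈ R', (1 + ((R.filter (G.Adj u)).card : ℝ))
          + ∑ u ∈ N, (1 + ((R.filter (G.Adj u)).card : ℝ)) := (Finset.sum_sdiff hNsub).symm
    rcases R'.eq_empty_or_nonempty with hR'e | hR'ne
    · -- R' empty : R.card = d+1
      have hMc : R.card = d + 1 := by rw [hR'e] at hcards; simpa using hcards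
      have hsum0 : ∑ u ∈ R', (1 + ((R.filter (G.Adj u)).card : ℝ)) = 0 := by
        rw [hR'e]; simp
      have ha1' : (1:ℝ) ≤ a := by exact_mod_cast ha1
      rw [hMc, hsplit, hsum0]
      push_cast
      nlinarith [hsumN, sq_nonneg ((d:ℝ)+1)]
    · -- R' nonempty : a ≥ 2
      have ha2 : 2 ≤ a := by
        obtain ⟨u, hu⟩ := hR'ne
        have hvnotR' : v ∉ R' := by
          rw [hR']; simp [hN]
        have huS : ({u} : Finset V) ⊆ R' := by simpa using hu
        have hins : IsIndepFinset G (insert v {u}) := by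
          have huR' : u ∈ R' := hu
          have hnadj : ¬ G.Adj v u := by
            have hun : u ∉ N := (Finset.mem_sdiff.mp huR').2
            intro hadj
            exact hun (by rw [hN]; exact Finset.mem_insert_of_mem (Finset.mem_filter.mpr ⟨(Finset.mem_sdiff.mp huR').1, hadj⟩))
          intro x hx y hy
          rcases Finset.mem_insert.mp hx with rfl | hx
          · rcases Finset.mem_insert.mp hy with rfl | hy
            · simp
            · simp only [Finset.mem_singleton] at hy; subst hy; exact hnadj
          · simp only [Finset.mem_singleton] at hx; subst hx
            rcases Finset.mem_insert.mp hy with rfl | hy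
            · exact fun h => hnadj (G.adj_symm h)
            · simp only [Finset.mem_singleton] at hy; subst hy; simp
        have hsub : insert v {u} ⊆ R := by
          intro x hx
          rcases Finset.mem_insert.mp hx with rfl | hx
          · exact hv
          · simp only [Finset.mem_singleton] at hx; subst hx
            exact (Finset.mem_sdiff.mp hu).1
        have hvu : v ≠ u := by
          rintro rfl
          exact (by rw [hR']; simp [hN] : v ∉ R') hu
        have := hind _ hsub hins
        rw [Finset.card_insert_of_notMem (by simpa using hvu)] at this
        simpa using this
      -- induction hypothesis
      have hR'lt : R'.card < n := by omega
      have hind' : ∀ S ⊆ R', IsIndepFinset G S → S.card ≤ a - 1 := by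
        intro S hS hSind
        have hvS : v ∉ S := fun h => by
          have := hS h
          rw [hR'] at this
          exact (Finset.mem_sdiff.mp this).2 (by rw [hN]; exact Finset.mem_insert_self _ _)
        have hins : IsIndepFinset G (insert v S) := by
          intro x hx y hy
          have hnadj : ∀ w ∈ S, ¬ G.Adj v w := by
            intro w hw hadj
            have hwR' := hS hw
            exact (Finset.mem_sdiff.mp hwR').2
              (by rw [hN]; exact Finset.mem_insert_of_mem (Finset.mem_filter.mpr ⟨(Finset.mem_sdiff.mp hwR').1, hadj⟩))
          rcases Finset.mem_insert.mp hx with hxv | hx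
          · rcases Finset.mem_insert.mp hy with hyv | hy
            · rw [hxv, hyv]; simp
            · rw [hxv]; exact hnadj _ hy
          · rcases Finset.mem_insert.mp hy with hyv | hy
            · rw [hyv]; exact fun h => hnadj _ hx (G.adj_symm h)
            · exact hSind _ hx _ hy
        have hsub : insert v S ⊆ R := by
          intro x hx
          rcases Finset.mem_insert.mp hx with rfl | hx
          · exact hv
          · exact Finset.sdiff_subset (hS hx)
        have := hind _ hsub hins
        rw [Finset.card_insert_of_notMem hvS] at this
        omega
      have hIH := ih R'.card hR'lt (a-1) R' rfl hind'
      have hmono : ∑ u ∈ R', (1 + ((R'.filter (G.Adj u)).card : ℝ))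
          ≤ ∑ u ∈ R', (1 + ((R.filter (G.Adj u)).card : ℝ)) := by
        apply Finset.sum_le_sum
        intro u _
        have : (R'.filter (G.Adj u)).card ≤ (R.filter (G.Adj u)).card :=
          Finset.card_le_card (Finset.filter_subset_filter _ Finset.sdiff_subset)
        have := (Nat.cast_le (α := ℝ)).2 this
        linarith
      -- assemble
      have haR : (2:ℝ) ≤ a := by exact_mod_cast ha2
      have hcast : ((a - 1 : ℕ) : ℝ) = (a:ℝ) - 1 := by
        have : 1 ≤ a := ha1; push_cast [this]; ring
      rw [hcast] at hIH
      have hy1 : (1:ℝ) ≤ R'.card := by exact_mod_cast Finset.one_le_card.mpr hR'ne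
      have hMcast : (R.card : ℝ) = (R'.card : ℝ) + ((d:ℝ) + 1) := by
        rw [hcards]; push_cast; ring
      set t := ∑ u ∈ R', (1 + ((R'.filter (G.Adj u)).card : ℝ)) with ht
      set t2 := ∑ u ∈ R', (1 + ((R.filter (G.Adj u)).card : ℝ)) with ht2
      set sN := ∑ u ∈ N, (1 + ((R.filter (G.Adj u)).card : ℝ)) with hsN
      rw [hsplit, hMcast]
      have ha0 : (0:ℝ) ≤ (a:ℝ) := by linarith
      have h1 : (a:ℝ) * ((R'.card:ℝ)^2) ≤ (a:ℝ) * (((a:ℝ)-1) * t) :=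
        mul_le_mul_of_nonneg_left hIH ha0
      have h2 : (a:ℝ) * t ≤ (a:ℝ) * t2 := mul_le_mul_of_nonneg_left hmono ha0
      have h3 : (a:ℝ) * (((d:ℝ)+1) * ((d:ℝ)+1)) ≤ (a:ℝ) * sN :=
        mul_le_mul_of_nonneg_left hsumN ha0
      have key : ((a:ℝ)-1) * (((R'.card:ℝ) + ((d:ℝ)+1))^2)
          ≤ ((a:ℝ)-1) * ((a:ℝ) * t + (a:ℝ) * (((d:ℝ)+1) * ((d:ℝ)+1))) := by
        nlinarith [h1, sq_nonneg (((a:ℝ)-1) * ((d:ℝ)+1) - (R'.card:ℝ))]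
      have key2 : ((R'.card:ℝ) + ((d:ℝ)+1))^2
          ≤ (a:ℝ) * t + (a:ℝ) * (((d:ℝ)+1) * ((d:ℝ)+1)) :=
        le_of_mul_le_mul_left (by linarith) (by linarith : (0:ℝ) < (a:ℝ)-1)
      calc ((R'.card:ℝ) + ((d:ℝ)+1))^2
          ≤ (a:ℝ) * t + (a:ℝ) * (((d:ℝ)+1) * ((d:ℝ)+1)) := key2
        _ ≤ (a:ℝ) * t2 + (a:ℝ) * sN := by linarith
        _ = (a:ℝ) * (t2 + sN) := by ring
end aux

open scoped Classical in
lemma exists_good_vertex {V : Type*} [Fintype V] (G : SimpleGraph V) (D : GraphOrientation G)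
    (R : Finset V) (a : ℕ) (ha : 1 ≤ a)
    (hind : ∀ S ⊆ R, IsIndepFinset G S → S.card ≤ a) (hne : R.Nonempty) :
    ∃ v ∈ R, ((R.card : ℝ) - a) / (2*a) ≤ ((R.filter (fun u => D.rel v u)).card : ℝ) := by
  have hkey := key_count G R.card a R rfl hind
  -- degree = outdeg + indeg
  have hdeg : ∀ v ∈ R, (R.filter (G.Adj v)).card
      = (R.filter (fun u => D.rel v u)).card + (R.filter (fun u => D.rel u v)).card := by
    intro v _
    have hunion : R.filter (G.Adj v)
        = R.filter (fun u => D.rel v u) ∪ R.filter (fun u => D.rel u v) := by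
      rw [← Finset.filter_or]
      apply Finset.filter_congr
      intro u _
      constructor
      · intro h; exact D.rel_of_adj v u h
      · rintro (h | h)
        · exact D.adj_of_rel v u h
        · exact (D.adj_of_rel u v h).symm
    rw [hunion, Finset.card_union_of_disjoint]
    rw [Finset.disjoint_filter]
    intro u _ h1 h2
    exact D.asymm v u h1 h2
  have hswap : ∑ v ∈ R, ((R.filter (fun u => D.rel u v)).card)
      = ∑ v ∈ R, ((R.filter (fun u => D.rel v u)).card) := by
    simp only [Finset.card_filter]
    rw [Finset.sum_comm]
  have hsum2 : ∑ v ∈ R, ((R.filter (G.Adj v)).card)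
      = 2 * ∑ v ∈ R, ((R.filter (fun u => D.rel v u)).card) := by
    rw [Finset.sum_congr rfl hdeg, Finset.sum_add_distrib, hswap]
    ring
  -- cast to ℝ
  set Od := ∑ v ∈ R, (((R.filter (fun u => D.rel v u)).card : ℝ)) with hOd
  have hsumR : ∑ v ∈ R, (1 + ((R.filter (G.Adj v)).card : ℝ)) = (R.card : ℝ) + 2 * Od := by
    rw [Finset.sum_add_distrib]
    congr 1
    · simp
    · rw [hOd, ← Nat.cast_sum, ← Nat.cast_sum, hsum2]
      push_cast
      ring
  rw [hsumR] at hkey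
  have haR : (1:ℝ) ≤ (a:ℝ) := by exact_mod_cast ha
  have hMa : (R.card : ℝ) * (((R.card:ℝ) - a) / (2*a)) ≤ Od := by
    rw [← mul_div_assoc, div_le_iff₀ (by linarith : (0:ℝ) < 2*(a:ℝ))]
    nlinarith [hkey]
  have havg : ∑ v ∈ R, (((R.card:ℝ) - a) / (2*a)) ≤ ∑ v ∈ R, (((R.filter (fun u => D.rel v u)).card : ℝ)) := by
    rw [Finset.sum_const, nsmul_eq_mul]
    exact hMa
  obtain ⟨v, hv, hle⟩ := Finset.exists_le_of_sum_le hne havg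
  exact ⟨v, hv, hle⟩

open scoped Classical in
lemma exists_domset {V : Type*} [Fintype V] (G : SimpleGraph V) (D : GraphOrientation G)
    (a : ℕ) (ha : 1 ≤ a) (hind : ∀ S : Finset V, IsIndepFinset G S → S.card ≤ a) :
    ∀ (n : ℕ) (R : Finset V), R.card = n →
      ∃ S ⊆ R, (∀ u ∈ R, u ∉ S → ∃ v ∈ S, D.rel v u) ∧
        (S.card : ℝ) ≤ (R.card : ℝ) ∧
        ((a:ℝ) < (R.card:ℝ) → (S.card : ℝ) ≤ (a:ℝ) + 2*(a:ℝ)*Real.log ((R.card:ℝ) / (a:ℝ))) := by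
  intro n
  induction n using Nat.strong_induction_on with
  | _ n ih =>
    intro R hRn
    have haR : (1:ℝ) ≤ (a:ℝ) := by exact_mod_cast ha
    by_cases hcase : (R.card:ℝ) ≤ (a:ℝ) ∨
        (R.card:ℝ) ≤ (a:ℝ) + 2*(a:ℝ)*Real.log ((R.card:ℝ) / (a:ℝ))
    · refine ⟨R, Finset.Subset.refl R, fun u hu hnu => absurd hu hnu, le_refl _, ?_⟩
      intro hlt
      rcases hcase with h | h
      · linarith
      · exact h
    · push_neg at hcase
      obtain ⟨h1, h2⟩ := hcase
      set A := (a:ℝ) with hA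
      set M := (R.card : ℝ) with hM
      have hM1 : a + 1 ≤ R.card := by
        by_contra hcon
        push_neg at hcon
        have : (R.card : ℝ) ≤ (a:ℝ) := by exact_mod_cast Nat.lt_succ_iff.mp hcon
        linarith
      have hMre : A + 1 ≤ M := by rw [hA, hM]; exact_mod_cast hM1
      have hne : R.Nonempty := Finset.card_pos.mp (by omega)
      obtain ⟨v, hv, hout⟩ := exists_good_vertex G D R a ha (fun S _ hS => hind S hS) hne
      set dd := (R.filter (fun u => D.rel v u)).card with hdd
      have hvN : v ∉ R.filter (fun u => D.rel v u) := by
        intro h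
        exact G.irrefl (D.adj_of_rel v v (Finset.mem_filter.mp h).2)
      set N : Finset V := insert v (R.filter (fun u => D.rel v u)) with hN
      have hNcard : N.card = dd + 1 := Finset.card_insert_of_notMem hvN
      have hNsub : N ⊆ R := by
        intro u hu
        rcases Finset.mem_insert.mp hu with rfl | hu
        · exact hv
        · exact (Finset.mem_filter.mp hu).1
      set R' := R \ N with hR'
      have hcards : R.card = R'.card + (dd + 1) := by
        have h1' : R'.card = R.card - N.card := Finset.card_sdiff_of_subset hNsub
        have h2' : N.card ≤ R.card := Finset.card_le_card hNsub
        omega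
      have hR'lt : R'.card < n := by omega
      obtain ⟨S', hS'sub, hS'dom, hS'le, hS'log⟩ := ih R'.card hR'lt R' rfl
      refine ⟨insert v S', ?_, ?_, ?_⟩
      · intro x hx
        rcases Finset.mem_insert.mp hx with rfl | hx
        · exact hv
        · exact Finset.sdiff_subset (hS'sub hx)
      · -- domination
        intro u hu hnu
        have huv : u ≠ v := fun h => hnu (h ▸ Finset.mem_insert_self v S')
        have hnuS' : u ∉ S' := fun h => hnu (Finset.mem_insert_of_mem h)
        by_cases huR' : u ∈ R'
        · obtain ⟨w, hw, hrel⟩ := hS'dom u huR' hnuS'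
          exact ⟨w, Finset.mem_insert_of_mem hw, hrel⟩
        · have huN : u ∈ N := by
            by_contra hcon
            exact huR' (Finset.mem_sdiff.mpr ⟨hu, hcon⟩)
          have : u ∈ R.filter (fun w => D.rel v w) := by
            rcases Finset.mem_insert.mp huN with h | h
            · exact absurd h huv
            · exact h
          exact ⟨v, Finset.mem_insert_self v S', (Finset.mem_filter.mp this).2⟩
      have hcardins : ((insert v S').card : ℝ) ≤ (S'.card : ℝ) + 1 := by
        exact_mod_cast Finset.card_insert_le v S'
      have hM'eq : (R'.card : ℝ) = M - ((dd:ℝ) + 1) := by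
        rw [hM]
        have := hcards
        push_cast [this]
        ring
      have hdd0 : (0:ℝ) ≤ (dd:ℝ) := Nat.cast_nonneg dd
      constructor
      · -- size bound 1 : card ≤ M
        calc ((insert v S').card : ℝ) ≤ (S'.card:ℝ) + 1 := hcardins
          _ ≤ (R'.card:ℝ) + 1 := by linarith [hS'le]
          _ ≤ M := by rw [hM'eq]; linarith
      · -- size bound 2
        intro _
        have hA0 : (0:ℝ) < A := by linarith
        have hM0 : (0:ℝ) < M := by linarith
        have hlog1 : 1 - A/M ≤ Real.log (M/A) := by
          have hx : (0:ℝ) < A/M := div_pos hA0 hM0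
          have hlsub := Real.log_le_sub_one_of_pos hx
          have hsplit : Real.log (A/M) = - Real.log (M/A) := by
            rw [Real.log_div (ne_of_gt hA0) (ne_of_gt hM0),
                Real.log_div (ne_of_gt hM0) (ne_of_gt hA0)]
            ring
          rw [hsplit] at hlsub
          linarith
        have hL1 : 1 ≤ 2*A*Real.log (M/A) := by
          have e1 : A / M ≤ A/(A+1) :=
            div_le_div_of_nonneg_left (by linarith) (by linarith) hMre
          have e2 : 1 - A/(A+1) = 1/(A+1) := by
            field_simp
            ring
          have e3 : 1/(A+1) ≤ Real.log (M/A) := by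
            rw [← e2]; linarith
          have e4 : 2*A*(1/(A+1)) ≤ 2*A*Real.log (M/A) :=
            mul_le_mul_of_nonneg_left e3 (by linarith)
          have e5 : 1 ≤ 2*A*(1/(A+1)) := by
            rw [mul_one_div, le_div_iff₀ (by linarith : (0:ℝ) < A+1)]
            linarith
          linarith
        by_cases hM'A : (R'.card : ℝ) ≤ A
        · calc ((insert v S').card : ℝ) ≤ (S'.card:ℝ) + 1 := hcardins
            _ ≤ (R'.card:ℝ) + 1 := by linarith [hS'le]
            _ ≤ A + 1 := by linarith
            _ ≤ A + 2*A*Real.log (M/A) := by linarith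
        · push_neg at hM'A
          have hM'0 : (0:ℝ) < (R'.card:ℝ) := by linarith
          have hS'b := hS'log hM'A
          have hout' : (M - A)/(2*A) ≤ (dd:ℝ) := hout
          have h2A : (0:ℝ) < 2*A := by linarith
          have hstep : (R'.card:ℝ) ≤ M * (1 - 1/(2*A)) := by
            have hEq : (M - A)/(2*A) = M/(2*A) - 1/2 := by
              field_simp
            rw [hEq] at hout'
            have hgoal : M * (1 - 1/(2*A)) = M - M * (1/(2*A)) := by ring
            have hmd : M * (1/(2*A)) = M/(2*A) := by ring
            rw [hM'eq, hgoal, hmd]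
            linarith
          have hexp : (1:ℝ) - 1/(2*A) ≤ Real.exp (-(1/(2*A))) := by
            have := Real.add_one_le_exp (-(1/(2*A)))
            linarith
          have hstep2 : (R'.card:ℝ) ≤ M * Real.exp (-(1/(2*A))) := by
            calc (R'.card:ℝ) ≤ M * (1 - 1/(2*A)) := hstep
            _ ≤ M * Real.exp (-(1/(2*A))) := mul_le_mul_of_nonneg_left hexp (by linarith)
          have hlogM' : Real.log (R'.card:ℝ) ≤ Real.log M - 1/(2*A) := by
            have hll := Real.log_le_log hM'0 hstep2
            rw [Real.log_mul (ne_of_gt hM0) (Real.exp_ne_zero _), Real.log_exp] at hll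
            linarith
          have hlogdiv : Real.log ((R'.card:ℝ)/A) ≤ Real.log (M/A) - 1/(2*A) := by
            rw [Real.log_div (ne_of_gt hM'0) (ne_of_gt hA0),
                Real.log_div (ne_of_gt hM0) (ne_of_gt hA0)]
            linarith
          have hinv : 2*A*(1/(2*A)) = 1 := by
            field_simp
          have e6 : 2*A*Real.log ((R'.card:ℝ)/A) ≤ 2*A*(Real.log (M/A) - 1/(2*A)) :=
            mul_le_mul_of_nonneg_left hlogdiv (by linarith)
          have e7 : 2*A*(Real.log (M/A) - 1/(2*A)) = 2*A*Real.log (M/A) - 2*A*(1/(2*A)) := by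
            ring
          rw [e7, hinv] at e6
          calc ((insert v S').card : ℝ) ≤ (S'.card:ℝ) + 1 := hcardins
            _ ≤ A + 2*A*Real.log ((R'.card:ℝ)/A) + 1 := by linarith
            _ ≤ A + 2*A*Real.log (M/A) := by linarith

open scoped Classical in
lemma exists_rdomset {V : Type*} [Fintype V] [Nonempty V] (G : SimpleGraph V)
    (D : GraphOrientation G) (r : ℕ) :
    ∀ R : Finset V, ∃ S ⊆ R,
      (∀ u ∈ R, u ∉ S → r ≤ (S.filter (fun v => D.rel v u)).card) ∧
      (S.card : ℝ) ≤ (r:ℝ) * ((alphaNum G : ℝ)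
        + 2*(alphaNum G : ℝ)*Real.log ((Fintype.card V : ℝ)/(alphaNum G : ℝ))) := by
  induction r with
  | zero =>
    intro R
    exact ⟨∅, Finset.empty_subset R, fun u _ _ => Nat.zero_le _, by simp⟩
  | succ r ihr =>
    intro R
    set a := alphaNum G with haa
    have ha : 1 ≤ a := one_le_alpha G
    have haR : (1:ℝ) ≤ (a:ℝ) := by exact_mod_cast ha
    have hna : a ≤ Fintype.card V := alpha_le_card G
    set B := (a:ℝ) + 2*(a:ℝ)*Real.log ((Fintype.card V : ℝ)/(a:ℝ)) with hB
    have hlog0 : 0 ≤ Real.log ((Fintype.card V : ℝ)/(a:ℝ)) := by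
      apply Real.log_nonneg
      rw [le_div_iff₀ (by linarith : (0:ℝ) < (a:ℝ)), one_mul]
      exact_mod_cast hna
    have hB0 : (a:ℝ) ≤ B := by
      rw [hB]
      nlinarith [hlog0, haR]
    obtain ⟨S₁, hS₁sub, hS₁dom, hS₁le, hS₁log⟩ :=
      exists_domset G D a ha (fun S hS => indep_card_le_alpha G S hS) R.card R rfl
    have hS₁B : (S₁.card : ℝ) ≤ B := by
      by_cases hc : (a:ℝ) < (R.card:ℝ)
      · have hb := hS₁log hc
        have hRn : (R.card : ℝ) ≤ (Fintype.card V : ℝ) := by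
          exact_mod_cast R.card_le_univ
        have hdm : ((R.card:ℝ))/(a:ℝ) ≤ (Fintype.card V : ℝ)/(a:ℝ) := by
          gcongr
        have hlm : Real.log ((R.card:ℝ)/(a:ℝ)) ≤ Real.log ((Fintype.card V:ℝ)/(a:ℝ)) :=
          Real.log_le_log (div_pos (by linarith) (by linarith)) hdm
        have hml := mul_le_mul_of_nonneg_left hlm (show (0:ℝ) ≤ 2*(a:ℝ) by linarith)
        rw [hB]
        linarith [hb]
      · push_neg at hc
        calc (S₁.card:ℝ) ≤ (R.card:ℝ) := hS₁le
          _ ≤ (a:ℝ) := hc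
          _ ≤ B := hB0
    obtain ⟨S', hS'sub, hS'dom, hS'card⟩ := ihr (R \ S₁)
    refine ⟨S₁ ∪ S', ?_, ?_, ?_⟩
    · intro x hx
      rcases Finset.mem_union.mp hx with h | h
      · exact hS₁sub h
      · exact Finset.sdiff_subset (hS'sub h)
    · intro u hu hnu
      have hu1 : u ∉ S₁ := fun h => hnu (Finset.mem_union_left _ h)
      have hu2 : u ∉ S' := fun h => hnu (Finset.mem_union_right _ h)
      obtain ⟨w, hw, hrel⟩ := hS₁dom u hu hu1
      have huR' : u ∈ R \ S₁ := Finset.mem_sdiff.mpr ⟨hu, hu1⟩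
      have hr' := hS'dom u huR' hu2
      have hdisj : Disjoint (S₁.filter (fun v => D.rel v u)) (S'.filter (fun v => D.rel v u)) := by
        apply Finset.disjoint_left.mpr
        intro x hx1 hx2
        exact (Finset.mem_sdiff.mp (hS'sub (Finset.mem_filter.mp hx2).1)).2
          (Finset.mem_filter.mp hx1).1
      have hfil : ((S₁ ∪ S').filter (fun v => D.rel v u))
          = S₁.filter (fun v => D.rel v u) ∪ S'.filter (fun v => D.rel v u) :=
        Finset.filter_union _ _ _
      rw [hfil, Finset.card_union_of_disjoint hdisj]
      have h1 : 1 ≤ (S₁.filter (fun v => D.rel v u)).card :=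
        Finset.card_pos.mpr ⟨w, Finset.mem_filter.mpr ⟨hw, hrel⟩⟩
      omega
    · have hcu : ((S₁ ∪ S').card : ℝ) ≤ (S₁.card : ℝ) + (S'.card : ℝ) := by
        exact_mod_cast Finset.card_union_le _ _
      push_cast
      push_cast at hS'card
      linarith [hS₁B, hS'card, hcu]

/-- `Γ_{d,r}(G) ≤ r α (1 + 2 ln(n/α))`. -/
theorem stmt_17 {V : Type*} [Fintype V] [Nonempty V] (G : SimpleGraph V) (r : ℕ)
    (hr : 1 ≤ r) :
    (GammaDr G r : ℝ) ≤ (r : ℝ) * (alphaNum G : ℝ) *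
      (1 + 2 * Real.log ((Fintype.card V : ℝ) / (alphaNum G : ℝ))) := by
  classical
  set a := alphaNum G with haa
  have ha : 1 ≤ a := one_le_alpha G
  have haR : (1:ℝ) ≤ (a:ℝ) := by exact_mod_cast ha
  have hna : a ≤ Fintype.card V := alpha_le_card G
  set B := (a:ℝ) + 2*(a:ℝ)*Real.log ((Fintype.card V : ℝ)/(a:ℝ)) with hB
  have hlog0 : 0 ≤ Real.log ((Fintype.card V : ℝ)/(a:ℝ)) := by
    apply Real.log_nonneg
    rw [le_div_iff₀ (by linarith : (0:ℝ) < (a:ℝ)), one_mul]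
    exact_mod_cast hna
  have hrB0 : (0:ℝ) ≤ (r:ℝ) * B := by
    apply mul_nonneg (Nat.cast_nonneg r)
    rw [hB]
    nlinarith [hlog0, haR]
  have hub : GammaDr G r ≤ ⌊(r:ℝ)*B⌋₊ := by
    unfold GammaDr
    apply csSup_le'
    rintro k ⟨D, rfl⟩
    obtain ⟨S, -, hdom, hcard⟩ := exists_rdomset G D r Finset.univ
    have hmem : IsDirRDomSet D.rel r ↑S := by
      intro u hu
      have hu' : u ∉ S := by simpa using hu
      have hd := hdom u (Finset.mem_univ u) hu'
      have hset : ({v | v ∈ (↑S : Set V) ∧ D.rel v u} : Set V)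
          = ↑(S.filter (fun v => D.rel v u)) := by
        ext x
        simp [Finset.mem_filter]
      rw [hset, Set.ncard_coe_finset]
      exact hd
    have hle : dirRDomNum V D.rel r ≤ S.card := by
      unfold dirRDomNum
      exact Nat.sInf_le ⟨S, hmem, rfl⟩
    exact le_trans hle (Nat.le_floor hcard)
  calc (GammaDr G r : ℝ) ≤ (⌊(r:ℝ)*B⌋₊ : ℝ) := by exact_mod_cast hub
    _ ≤ (r:ℝ)*B := Nat.floor_le hrB0
    _ = (r:ℝ)*(a:ℝ)*(1 + 2*Real.log ((Fintype.card V : ℝ)/(a:ℝ))) := by rw [hB]; ring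
end

section
/- For every graph G and every integer d ≥ 2, the directed d-distance domination number of G equals the independence number: Γ_d(G,d) = α(G). -/
/-- `reachWithin D k u v` means there is a directed path from `u` to `v` in `D`
with at most `k` arcs. -/
def reachWithin {V : Type*} (D : V → V → Prop) : ℕ → V → V → Prop
  | 0 => fun u v => u = v
  | (k + 1) => fun u v => u = v ∨ ∃ w, D u w ∧ reachWithin D k w v

/-- The directed `d`-distance domination number of the digraph `D`. -/
noncomputable def dirDistDomNum (V : Type*) [Fintype V] (D : V → V → Prop) (d : ℕ) : ℕ :=
  sInf {k | ∃ S : Finset V,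
    (∀ v, v ∉ S → ∃ u ∈ S, reachWithin D d u v) ∧ S.card = k}

/-- The directed `d`-distance domination number of a graph: max over orientations. -/
noncomputable def GammaDdist {V : Type*} [Fintype V] (G : SimpleGraph V) (d : ℕ) : ℕ :=
  sSup {k | ∃ D : GraphOrientation G, dirDistDomNum V D.rel d = k}

section AuxLemmas

lemma reachWithin_succ {V : Type*} (D : V → V → Prop) (k : ℕ) (u v : V)
    (h : reachWithin D k u v) : reachWithin D (k + 1) u v := by
  induction k generalizing u with
  | zero => exact Or.inl h
  | succ k ih =>
    rcases h with rfl | ⟨w, hw, hr⟩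
    · exact Or.inl rfl
    · exact Or.inr ⟨w, hw, ih w hr⟩

lemma reachWithin_mono {V : Type*} (D : V → V → Prop) {k m : ℕ} (hkm : k ≤ m) (u v : V)
    (h : reachWithin D k u v) : reachWithin D m u v := by
  induction m, hkm using Nat.le_induction with
  | base => exact h
  | succ m _ ih => exact reachWithin_succ D m u v ih

lemma reachWithin_last {V : Type*} (D : V → V → Prop) (k : ℕ) (u v : V)
    (h : reachWithin D k u v) : u = v ∨ ∃ x, D x v := by
  induction k generalizing u with
  | zero => exact Or.inl h
  | succ k ih =>
    rcases h with rfl | ⟨w, hw, hr⟩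
    · exact Or.inl rfl
    · rcases ih w hr with rfl | hx
      · exact Or.inr ⟨u, hw⟩
      · exact Or.inr hx

/-- Chvátal–Lovász semi-kernel (out-version), restricted to a finite ground set `T`:
an independent set `Q ⊆ T` such that every vertex of `T` outside `Q` is within
directed distance `2` of some vertex of `Q`. -/
lemma semikernel {V : Type*} [DecidableEq V] (D : V → V → Prop)
    (hasym : ∀ u v, D u v → ¬ D v u) (T : Finset V) :
    ∃ Q : Finset V, Q ⊆ T ∧ (∀ u ∈ Q, ∀ w ∈ Q, ¬ D u w) ∧
      ∀ w ∈ T, w ∉ Q → ∃ u ∈ Q, reachWithin D 2 u w := by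
  classical
  induction T using Finset.strongInduction with
  | _ T ih =>
    rcases T.eq_empty_or_nonempty with rfl | ⟨v, hv⟩
    · exact ⟨∅, by simp, by simp, by simp⟩
    · set A := T.filter (fun w => w = v ∨ D v w) with hAdef
      have hvA : v ∈ A := Finset.mem_filter.mpr ⟨hv, Or.inl rfl⟩
      have hsub : T \ A ⊂ T := by
        apply Finset.ssubset_iff_of_subset (Finset.sdiff_subset) |>.mpr
        exact ⟨v, hv, by simp [hvA]⟩
      obtain ⟨Q', hQ'sub, hQ'ind, hQ'dom⟩ := ih (T \ A) hsub
      have hQ'T : Q' ⊆ T := hQ'sub.trans Finset.sdiff_subset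
      by_cases h : ∃ u ∈ Q', D u v
      · refine ⟨Q', hQ'T, hQ'ind, fun w hw hwQ => ?_⟩
        by_cases hwA : w ∈ A
        · obtain ⟨u, hu, huv⟩ := h
          rcases (Finset.mem_filter.mp hwA).2 with rfl | hvw
          · exact ⟨u, hu, Or.inr ⟨w, huv, Or.inl rfl⟩⟩
          · exact ⟨u, hu, Or.inr ⟨v, huv, Or.inr ⟨w, hvw, rfl⟩⟩⟩
        · exact hQ'dom w (Finset.mem_sdiff.mpr ⟨hw, hwA⟩) hwQ
      · push_neg at h
        refine ⟨insert v Q', ?_, ?_, ?_⟩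
        · exact Finset.insert_subset hv hQ'T
        · intro u hu w hw
          rcases Finset.mem_insert.mp hu with rfl | hu' <;>
            rcases Finset.mem_insert.mp hw with rfl | hw'
          · exact fun hd => hasym _ _ hd hd
          · have hwA : w ∉ A := (Finset.mem_sdiff.mp (hQ'sub hw')).2
            intro hd
            exact hwA (Finset.mem_filter.mpr ⟨hQ'T hw', Or.inr hd⟩)
          · exact h u hu'
          · exact hQ'ind u hu' w hw'
        · intro w hw hwQ
          have hwv : w ≠ v := fun hwv => hwQ (hwv ▸ Finset.mem_insert_self v Q')
          by_cases hwA : w ∈ A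
          · rcases (Finset.mem_filter.mp hwA).2 with rfl | hvw
            · exact absurd rfl hwv
            · exact ⟨v, Finset.mem_insert_self v Q', Or.inr ⟨w, hvw, Or.inl rfl⟩⟩
          · obtain ⟨u, hu, hr⟩ := hQ'dom w (Finset.mem_sdiff.mpr ⟨hw, hwA⟩)
              (fun hw' => hwQ (Finset.mem_insert_of_mem hw'))
            exact ⟨u, Finset.mem_insert_of_mem hu, hr⟩

lemma alphaBdd {V : Type*} [Fintype V] (G : SimpleGraph V) :
    BddAbove {k | ∃ S : Finset V, IsIndepFinset G S ∧ S.card = k} :=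
  ⟨Fintype.card V, fun _ ⟨S, _, hS⟩ => hS ▸ S.card_le_univ⟩

lemma alpha_mem {V : Type*} [Fintype V] (G : SimpleGraph V) :
    ∃ S : Finset V, IsIndepFinset G S ∧ S.card = alphaNum G := by
  have hne : {k | ∃ S : Finset V, IsIndepFinset G S ∧ S.card = k}.Nonempty :=
    ⟨0, ∅, by simp [IsIndepFinset], rfl⟩
  exact Nat.sSup_mem hne (alphaBdd G)

/-- Part (a): any orientation's `d`-distance domination number is at most `α(G)`. -/
lemma dirDistDomNum_le_alpha {V : Type*} [Fintype V] (G : SimpleGraph V)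
    (D : GraphOrientation G) (d : ℕ) (hd : 2 ≤ d) :
    dirDistDomNum V D.rel d ≤ alphaNum G := by
  classical
  obtain ⟨Q, -, hind, hdom⟩ := semikernel D.rel D.asymm Finset.univ
  have hindG : IsIndepFinset G Q := by
    intro u hu w hw hadj
    rcases D.rel_of_adj u w hadj with h | h
    · exact hind u hu w hw h
    · exact hind w hw u hu h
  have h1 : dirDistDomNum V D.rel d ≤ Q.card := by
    apply Nat.sInf_le
    refine ⟨Q, fun v hv => ?_, rfl⟩
    obtain ⟨u, hu, hr⟩ := hdom v (Finset.mem_univ v) hv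
    exact ⟨u, hu, reachWithin_mono D.rel hd u v hr⟩
  have h2 : Q.card ≤ alphaNum G := le_csSup (alphaBdd G) ⟨Q, hindG, rfl⟩
  omega

/-- The orientation pointing every edge away from an independent set `A`,
orienting the remaining edges by a well-ordering. -/
noncomputable def orientAway {V : Type*} (G : SimpleGraph V) (A : Finset V)
    (hA : IsIndepFinset G A) : GraphOrientation G where
  rel u v := G.Adj u v ∧ (u ∈ A ∨ (v ∉ A ∧ WellOrderingRel u v))
  adj_of_rel u v h := h.1
  rel_of_adj u v h := by
    by_cases hu : u ∈ A
    · exact Or.inl ⟨h, Or.inl hu⟩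
    by_cases hv : v ∈ A
    · exact Or.inr ⟨h.symm, Or.inl hv⟩
    rcases trichotomous_of WellOrderingRel u v with hlt | rfl | hgt
    · exact Or.inl ⟨h, Or.inr ⟨hv, hlt⟩⟩
    · exact absurd h (G.irrefl)
    · exact Or.inr ⟨h.symm, Or.inr ⟨hu, hgt⟩⟩
  asymm u v h h' := by
    rcases h.2 with hu | ⟨hv, hlt⟩
    · rcases h'.2 with hv | ⟨hu', _⟩
      · exact hA u hu v hv h.1
      · exact hu' hu
    · rcases h'.2 with hv' | ⟨_, hgt⟩
      · exact hv hv'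
      · exact (irrefl_of WellOrderingRel u) (trans_of WellOrderingRel hlt hgt)

/-- In `orientAway`, no arc enters `A`. -/
lemma orientAway_no_arc_into {V : Type*} (G : SimpleGraph V) (A : Finset V)
    (hA : IsIndepFinset G A) (x a : V) (ha : a ∈ A) :
    ¬ (orientAway G A hA).rel x a := by
  rintro ⟨hadj, hx | ⟨ha', -⟩⟩
  · exact hA x hx a ha hadj
  · exact ha' ha

/-- Part (b): the orientation away from a maximum independent set has
`d`-distance domination number at least `|A|`. -/
lemma alpha_le_dirDistDomNum {V : Type*} [Fintype V] (G : SimpleGraph V) (A : Finset V)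
    (hA : IsIndepFinset G A) (d : ℕ) :
    A.card ≤ dirDistDomNum V (orientAway G A hA).rel d := by
  classical
  apply le_csInf
  · exact ⟨(Finset.univ : Finset V).card, Finset.univ, by simp, rfl⟩
  · rintro k ⟨S, hSdom, rfl⟩
    apply Finset.card_le_card
    intro a ha
    by_contra haS
    obtain ⟨u, hu, hr⟩ := hSdom a haS
    rcases reachWithin_last _ d u a hr with rfl | ⟨x, hx⟩
    · exact haS hu
    · exact orientAway_no_arc_into G A hA x a ha hx

end AuxLemmas

/-- For every `d ≥ 2`, `Γ_d(G,d) = α(G)`. -/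
theorem stmt_18 {V : Type*} [Fintype V] (G : SimpleGraph V) (d : ℕ) (hd : 2 ≤ d) :
    GammaDdist G d = alphaNum G := by
  classical
  obtain ⟨A, hAind, hAcard⟩ := alpha_mem G
  have heq : dirDistDomNum V (orientAway G A hAind).rel d = alphaNum G := by
    have h1 := dirDistDomNum_le_alpha G (orientAway G A hAind) d hd
    have h2 := alpha_le_dirDistDomNum G A hAind d
    omega
  have hmem : alphaNum G ∈ {k | ∃ D : GraphOrientation G, dirDistDomNum V D.rel d = k} :=
    ⟨orientAway G A hAind, heq⟩
  apply le_antisymm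
  · exact csSup_le ⟨alphaNum G, hmem⟩
      (by rintro k ⟨D, rfl⟩; exact dirDistDomNum_le_alpha G D d hd)
  · exact le_csSup ⟨alphaNum G,
      by rintro k ⟨D, rfl⟩; exact dirDistDomNum_le_alpha G D d hd⟩ hmem
end

section
/- Chvátal–Lovász theorem: Every directed graph D contains a semi-kernel, i.e., an independent set U of vertices such that for every vertex v ∈ V(D) \ U there exists u ∈ U with directed distance d_D(u,v) ≤ 2. -/
open Classical in
lemma semikernel_aux {V : Type*} [DecidableEq V] (D : V → V → Prop) (S : Finset V) :
    ∃ U : Finset V, U ⊆ S ∧ (∀ u ∈ U, ∀ v ∈ U, u ≠ v → ¬ D u v) ∧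
      ∀ v ∈ S, v ∉ U → ∃ u ∈ U, reachWithin D 2 u v := by
  induction S using Finset.strongInduction with
  | _ S ih =>
    rcases S.eq_empty_or_nonempty with rfl | ⟨u, hu⟩
    · exact ⟨∅, by simp⟩
    · set S' : Finset V := S.filter (fun w => w ≠ u ∧ ¬ D u w) with hS'def
      have hS'sub : S' ⊆ S := Finset.filter_subset _ _
      have huS' : u ∉ S' := by simp [hS'def]
      have hlt : S' ⊂ S := ⟨hS'sub, fun h => huS' (h hu)⟩
      obtain ⟨Q, hQsub, hQind, hQcov⟩ := ih S' hlt
      by_cases hq : ∃ q ∈ Q, D q u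
      · obtain ⟨q, hqQ, hqu⟩ := hq
        refine ⟨Q, hQsub.trans hS'sub, hQind, fun v hv hvQ => ?_⟩
        by_cases hvS' : v ∈ S'
        · exact hQcov v hvS' hvQ
        · have : ¬ (v ≠ u ∧ ¬ D u v) := by
            intro h; exact hvS' (Finset.mem_filter.mpr ⟨hv, h⟩)
          push_neg at this
          by_cases hvu : v = u
          · exact ⟨q, hqQ, Or.inr ⟨u, hqu, Or.inl hvu.symm⟩⟩
          · exact ⟨q, hqQ, Or.inr ⟨u, hqu, Or.inr ⟨v, this hvu, rfl⟩⟩⟩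
      · push_neg at hq
        have huQ : u ∉ Q := fun h => huS' (hQsub h)
        refine ⟨insert u Q, ?_, ?_, ?_⟩
        · intro x hx
          rcases Finset.mem_insert.mp hx with rfl | hx
          · exact hu
          · exact hS'sub (hQsub hx)
        · intro a ha b hb hab
          rcases Finset.mem_insert.mp ha with rfl | ha'
          · rcases Finset.mem_insert.mp hb with rfl | hb'
            · exact absurd rfl hab
            · exact (Finset.mem_filter.mp (hQsub hb')).2.2
          · rcases Finset.mem_insert.mp hb with rfl | hb'
            · exact hq a ha'
            · exact hQind a ha' b hb' hab
        · intro v hv hvU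
          have hvu : v ≠ u := fun h => hvU (h ▸ Finset.mem_insert_self u Q)
          have hvQ : v ∉ Q := fun h => hvU (Finset.mem_insert_of_mem h)
          by_cases hvS' : v ∈ S'
          · obtain ⟨w, hwQ, hw⟩ := hQcov v hvS' hvQ
            exact ⟨w, Finset.mem_insert_of_mem hwQ, hw⟩
          · have : ¬ (v ≠ u ∧ ¬ D u v) := by
              intro h; exact hvS' (Finset.mem_filter.mpr ⟨hv, h⟩)
            push_neg at this
            exact ⟨u, Finset.mem_insert_self u Q,
              Or.inr ⟨v, this hvu, Or.inl rfl⟩⟩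

/-- Chvátal–Lovász: every digraph contains a semi-kernel, i.e. an independent set `U`
such that every vertex outside `U` is within directed distance 2 of some vertex of `U`. -/
theorem stmt_19 {V : Type*} [Fintype V] (D : V → V → Prop) :
    ∃ U : Set V, (∀ u ∈ U, ∀ v ∈ U, u ≠ v → ¬ D u v) ∧
      ∀ v, v ∉ U → ∃ u ∈ U, reachWithin D 2 u v := by
  classical
  obtain ⟨U, -, hind, hcov⟩ := semikernel_aux D (Finset.univ : Finset V)
  exact ⟨↑U, fun u hu v hv => hind u hu v hv,
    fun v hv => by
      obtain ⟨u, hu, h⟩ := hcov v (Finset.mem_univ v) (by simpa using hv)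
      exact ⟨u, hu, h⟩⟩
end
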